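/- Fix an integer ℓ ≥ 2, set n = ℓ + 1 and h = n, with all indices in ℤ/nℤ. Let a_{ij} = 2 if i = j, a_{ij} = −1 if i − j ≡ ±1 (mod n), and a_{ij} = 0 otherwise; let b_{ij} = 1 if j ≡ i − 1, b_{ij} = −1 if j ≡ i + 1, and b_{ij} = 0 otherwise. For a field K and data φ, χ : ℤ/nℤ → K with φ_j ≠ 0, define R_j(φ, χ) = (φ̃, χ̃) by φ̃_i = φ_i + h·b_{ij}·χ_j/φ_j and χ̃_i = χ_i − a_{ij}·χ_j for all i. Then: (i) if φ_j ≠ 0 then R_j(R_j(φ, χ)) = (φ, χ); (ii) if i, j ∈ ℤ/nℤ satisfy a_{ij} = 0 (i.e. i ≢ j, j±1 mod n) and φ_i ≠ 0, φ_j ≠ 0, then R_i(R_j(φ, χ)) = R_j(R_i(φ, χ)); (iii) Σ_{i ∈ ℤ/nℤ} χ̃_i = Σ_{i ∈ ℤ/nℤ} χ_i, i.e. R_j preserves the normalization Σ_i χ_i. -/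
import Mathlib


/-- The Cartan matrix of affine type `A_ℓ^{(1)}` (indices in `ℤ/nℤ`, `n = ℓ+1`):
`a_{ij} = 2` if `i = j`, `−1` if `i − j ≡ ±1`, and `0` otherwise. -/
def cartanA (K : Type*) [Field K] {n : ℕ} (i j : ZMod n) : K :=
  if i = j then 2 else if i - j = 1 ∨ i - j = -1 then -1 else 0

/-- The orientation data: `b_{ij} = 1` if `j = i − 1`, `−1` if `j = i + 1`, `0` else. -/
def orientB (K : Type*) [Field K] {n : ℕ} (i j : ZMod n) : K :=
  if j = i - 1 then 1 else if j = i + 1 then -1 else 0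

/-- The Bäcklund transformation `R_j` of type `A_ℓ^{(1)}` acting on data `(φ, χ)`:
`R_j(φ)_i = φ_i + n·b_{ij}·χ_j/φ_j` and `R_j(χ)_i = χ_i − a_{ij}·χ_j` (here `h = n`). -/
def backlundR (K : Type*) [Field K] {n : ℕ} (j : ZMod n)
    (p : (ZMod n → K) × (ZMod n → K)) : (ZMod n → K) × (ZMod n → K) :=
  (fun i => p.1 i + (n : K) * orientB K i j * (p.2 j / p.1 j),
   fun i => p.2 i - cartanA K i j * p.2 j)

/-- for the Bäcklund transformations of type `A_ℓ^{(1)}` (`ℓ ≥ 2`):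
(i) `R_j² = Id` (when `φ_j ≠ 0`); (ii) `R_i R_j = R_j R_i` when `a_{ij} = 0`
(and `φ_i ≠ 0`, `φ_j ≠ 0`); (iii) `R_j` preserves the normalization `Σ_i χ_i`. -/
theorem stmt_17 (ℓ : ℕ) (hℓ : 2 ≤ ℓ) (K : Type*) [Field K]
    (p : (ZMod (ℓ + 1) → K) × (ZMod (ℓ + 1) → K)) :
    (∀ j : ZMod (ℓ + 1), p.1 j ≠ 0 → backlundR K j (backlundR K j p) = p)
    ∧ (∀ i j : ZMod (ℓ + 1), cartanA K i j = 0 → p.1 i ≠ 0 → p.1 j ≠ 0 →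
        backlundR K i (backlundR K j p) = backlundR K j (backlundR K i p))
    ∧ (∀ j : ZMod (ℓ + 1),
        ∑ i : ZMod (ℓ + 1), (backlundR K j p).2 i = ∑ i : ZMod (ℓ + 1), p.2 i) := by
  have h10 : (1 : ZMod (ℓ + 1)) ≠ 0 := by
    haveI : Fact (1 < ℓ + 1) := ⟨by omega⟩
    exact one_ne_zero
  have h1m1 : (1 : ZMod (ℓ + 1)) ≠ -1 := by
    intro he
    haveI : NeZero (ℓ + 1) := ⟨by omega⟩
    have h2 : ((2:ℕ) : ZMod (ℓ + 1)) = 0 := by push_cast; linear_combination he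
    rw [ZMod.natCast_eq_zero_iff] at h2
    have := Nat.le_of_dvd (by norm_num) h2
    omega
  refine ⟨?_, ?_, ?_⟩
  · -- (i) involution
    intro j _
    have hb : orientB K j j = 0 := by
      rw [orientB, if_neg, if_neg]
      · intro h; exact h10 (by linear_combination -h)
      · intro h; exact h10 (by linear_combination h)
    have ha : cartanA K j j = 2 := by rw [cartanA, if_pos rfl]
    refine Prod.ext ?_ ?_ <;> funext i <;>
      simp only [backlundR, hb, ha] <;> ring
  · -- (ii) commutation
    intro i j hc _ _
    by_cases hij : i = j
    · subst hij; rfl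
    · rw [cartanA, if_neg hij] at hc
      have hor : ¬ (i - j = 1 ∨ i - j = -1) := by
        intro h; rw [if_pos h] at hc
        exact one_ne_zero (α := K) (by linear_combination -hc)
      push_neg at hor
      obtain ⟨h1, h2⟩ := hor
      have haij : cartanA K i j = 0 := by rw [cartanA, if_neg hij, if_neg]; tauto
      have haji : cartanA K j i = 0 := by
        rw [cartanA, if_neg (Ne.symm hij), if_neg]
        rintro (h | h)
        · exact h2 (by linear_combination -h)
        · exact h1 (by linear_combination -h)
      have hbij : orientB K i j = 0 := by
        rw [orientB, if_neg, if_neg]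
        · intro h; exact h2 (by linear_combination -h)
        · intro h; exact h1 (by linear_combination -h)
      have hbji : orientB K j i = 0 := by
        rw [orientB, if_neg, if_neg]
        · intro h; exact h1 (by linear_combination h)
        · intro h; exact h2 (by linear_combination h)
      refine Prod.ext ?_ ?_ <;> funext k <;>
        simp only [backlundR, haij, haji, hbij, hbji] <;> ring
  · -- (iii) normalization
    intro j
    have key : ∀ i : ZMod (ℓ + 1), cartanA K i j =
        (if i = j then (2:K) else 0) + (if i = j + 1 then (-1:K) else 0)
          + (if i = j - 1 then (-1:K) else 0) := by
      intro i
      by_cases hij : i = j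
      · subst hij
        rw [cartanA, if_pos rfl, if_pos rfl, if_neg, if_neg]
        · ring
        · intro h; exact h10 (by linear_combination h)
        · intro h; exact h10 (by linear_combination -h)
      · by_cases hp : i = j + 1
        · rw [cartanA, if_neg hij, if_pos (Or.inl (by linear_combination hp)),
            if_neg hij, if_pos hp, if_neg]
          · ring
          · intro h; exact h1m1 (by linear_combination h - hp)
        · by_cases hm : i = j - 1
          · rw [cartanA, if_neg hij, if_pos (Or.inr (by linear_combination hm)),
              if_neg hij, if_neg hp, if_pos hm]
            ring
          · rw [cartanA, if_neg hij, if_neg, if_neg hij, if_neg hp, if_neg hm]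
            · ring
            · rintro (h | h)
              · exact hp (by linear_combination h)
              · exact hm (by linear_combination h)
    have hs : ∑ i : ZMod (ℓ + 1), cartanA K i j = 0 := by
      simp only [key, Finset.sum_add_distrib, Finset.sum_ite_eq',
        Finset.mem_univ, if_true]
      ring
    simp only [backlundR, Finset.sum_sub_distrib, ← Finset.sum_mul, hs, zero_mul,
      sub_zero]
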